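/- arXiv:0706.0219 — 2 statements merged into one kernel-verified Lean document; each statement's English description precedes it below -/
import Mathlib

section
/- In the finite growth model with no white vertices, for an initially green vertex x, let T̂(x) be the subgraph induced on the vertex set of the stopped-invasion tree T(x) (all edges of G with both end-vertices in T(x)), and let Ē be the set of edges of G with exactly one end-vertex in T(x), that end-vertex different from R. Then the pair (T̂(x), Ē) is autonomous with respect to the given colours and τ-values. -/
open MeasureTheory ProbabilityTheory Set
open scoped ENNReal

namespace RandomSpatialGrowth

/-- The three possible colours of a vertex of the growth model. -/
inductive Color : Type
  | white : Color
  | red : Color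
  | green : Color
  deriving DecidableEq

instance : MeasurableSpace Color := ⊤

/-- A numerical encoding of the colours (used only to state independence). -/
def Color.code : Color → ℝ
  | Color.white => 0
  | Color.red => 1
  | Color.green => 2

variable {V : Type*}

/-- Edge `e` has at least one green end-vertex at time `t`. -/
def greenTouch (col : ℝ → V → Color) (t : ℝ) (e : Sym2 V) : Prop :=
  ∃ v ∈ e, col t v = Color.green

/-- `u` and `v` are joined by a path of edges of the arena `A` that are all open at time `t`. -/
def openConn {G : SimpleGraph V} (A : G.Subgraph) (opn : ℝ → Sym2 V → Prop) (t : ℝ)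
    (u v : V) : Prop :=
  Relation.ReflTransGen (fun a b => A.Adj a b ∧ opn t s(a, b)) u v

/-- A time evolution of the growth process on the arena (subgraph) `A` of `G`, with initial
colours `c` and opening times `τ`.  `opn t e` says that the edge `e` is open at time `t` and
`col t v` is the colour of the vertex `v` at time `t`.  The axioms characterize the dynamics:
all edges are initially closed and an edge of the arena is open at time `t` iff the set of
earlier (nonnegative) times at which it had at least one green end-vertex has Lebesgue measure
at least `τ e`; instantaneously upon openings, white vertices touched by green become green and
green clusters touching red become red, so that at any time a vertex is red iff it is joined by
open edges to an initially red vertex, and it is white iff it is initially white and no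
incident edge has opened. -/
structure Evolution {G : SimpleGraph V} (A : G.Subgraph) (c : V → Color)
    (τ : Sym2 V → ℝ) where
  opn : ℝ → Sym2 V → Prop
  col : ℝ → V → Color
  open_iff : ∀ t, 0 ≤ t → ∀ e ∈ A.edgeSet,
    (opn t e ↔ ENNReal.ofReal (τ e) ≤ volume {s : ℝ | 0 ≤ s ∧ s < t ∧ greenTouch col s e})
  closed_outside : ∀ (t : ℝ) (e : Sym2 V), e ∉ A.edgeSet → ¬ opn t e
  red_iff : ∀ t, 0 ≤ t → ∀ v ∈ A.verts,
    (col t v = Color.red ↔ ∃ w, openConn A opn t v w ∧ c w = Color.red)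
  white_iff : ∀ t, 0 ≤ t → ∀ v ∈ A.verts,
    (col t v = Color.white ↔ c v = Color.white ∧ ∀ w, A.Adj v w → ¬ opn t s(v, w))

/-- `u` and `v` belong to the same green cluster at time `t`:  they are joined by a path of
open edges all of whose vertices are green at time `t`. -/
def greenConn {G : SimpleGraph V} (A : G.Subgraph) (opn : ℝ → Sym2 V → Prop)
    (col : ℝ → V → Color) (t : ℝ) (u v : V) : Prop :=
  Relation.ReflTransGen
    (fun a b => A.Adj a b ∧ opn t s(a, b) ∧ col t a = Color.green ∧ col t b = Color.green) u v

/-- `u` and `v` belong to the same red cluster at time `t`:  they are joined by a path of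
open edges all of whose vertices are red at time `t`. -/
def redConn {G : SimpleGraph V} (A : G.Subgraph) (opn : ℝ → Sym2 V → Prop)
    (col : ℝ → V → Color) (t : ℝ) (u v : V) : Prop :=
  Relation.ReflTransGen
    (fun a b => A.Adj a b ∧ opn t s(a, b) ∧ col t a = Color.red ∧ col t b = Color.red) u v

/-- The green cluster of `v` just before it becomes red: the union over all times `t ≥ 0`
of the green cluster of `v` at time `t`. -/
def Cg {G : SimpleGraph V} {A : G.Subgraph} {c : V → Color} {τ : Sym2 V → ℝ}
    (ev : Evolution A c τ) (v : V) : Set V :=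
  {x | ∃ t, 0 ≤ t ∧ ev.col t v = Color.green ∧ greenConn A ev.opn ev.col t v x}

/-- The initially green vertex `v` becomes red due to the initially red vertex `w` :
at some time, `v` is red and its red cluster contains `w`. -/
def dueTo {G : SimpleGraph V} {A : G.Subgraph} {c : V → Color} {τ : Sym2 V → ℝ}
    (ev : Evolution A c τ) (v w : V) : Prop :=
  c v = Color.green ∧ c w = Color.red ∧
    ∃ t, 0 ≤ t ∧ ev.col t v = Color.red ∧ redConn A ev.opn ev.col t v w

/-- The set `D(w)` of initially green vertices that become red due to `w`. -/
def Dset {G : SimpleGraph V} {A : G.Subgraph} {c : V → Color} {τ : Sym2 V → ℝ}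
    (ev : Evolution A c τ) (w : V) : Set V :=
  {v | dueTo ev v w}

/-- The vertex `x` becomes red exactly at time `t₀`. -/
def becomesRedAt {G : SimpleGraph V} {A : G.Subgraph} {c : V → Color} {τ : Sym2 V → ℝ}
    (ev : Evolution A c τ) (x : V) (t₀ : ℝ) : Prop :=
  0 ≤ t₀ ∧ ev.col t₀ x = Color.red ∧ ∀ s, 0 ≤ s → s < t₀ → ev.col s x ≠ Color.red

/-- The pair `(H, Ebar)` — a subgraph `H` of `G` with finite vertex set together with a set
`Ebar` of edges of `G` having exactly one end-vertex in `H` — is autonomous for the initial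
colours `c` and opening times `τ` :  for every finite subgraph `G₀` of `G` containing `H` and
all the edges of `Ebar`, the growth process on `G₀`, restricted to `H`, always has the same
time evolution, which does not depend on the colours and `τ`-values outside of `H` and `Ebar`. -/
def Autonomous (G : SimpleGraph V) (c : V → Color) (τ : Sym2 V → ℝ)
    (H : G.Subgraph) (Ebar : Set (Sym2 V)) : Prop :=
  H.verts.Finite ∧ Ebar.Finite ∧
  (∀ e ∈ Ebar, e ∈ G.edgeSet ∧ ∃! v, v ∈ e ∧ v ∈ H.verts) ∧
  ∃ (colH : ℝ → V → Color) (opnH : ℝ → Sym2 V → Prop),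
    ∀ G₀ : G.Subgraph, G₀.verts.Finite → H ≤ G₀ → Ebar ⊆ G₀.edgeSet →
      ∀ (c' : V → Color) (τ' : Sym2 V → ℝ),
        (∀ v ∈ H.verts, c' v = c v) →
        (∀ e ∈ H.edgeSet ∪ Ebar, τ' e = τ e) →
        ∀ ev : Evolution G₀ c' τ',
          (∀ t, 0 ≤ t → ∀ v ∈ H.verts, ev.col t v = colH t v) ∧
          (∀ t, 0 ≤ t → ∀ e ∈ H.edgeSet, (ev.opn t e ↔ opnH t e))

/-- The vertex set of the invasion tree grown from `x` after `n` steps, when the `k`-th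
invaded edge is `E k`. -/
def treeVerts (x : V) (E : ℕ → Sym2 V) (n : ℕ) : Set V :=
  {x} ∪ ⋃ k < n, {v : V | v ∈ E k}

/-- Step `n` of the invasion procedure started at `x` is correct :  among all edges of `G`
having exactly one end-vertex in the current tree, `E n` is the one of minimal `τ`-value. -/
def InvStep (G : SimpleGraph V) (τ : Sym2 V → ℝ) (x : V) (E : ℕ → Sym2 V) (n : ℕ) : Prop :=
  E n ∈ G.edgeSet ∧ (∃! v, v ∈ E n ∧ v ∈ treeVerts x E n) ∧
    ∀ e' ∈ G.edgeSet, (∃! v, v ∈ e' ∧ v ∈ treeVerts x E n) → τ (E n) ≤ τ e'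

/-- The edges `E 0, …, E (m-1)` form the stopped invasion procedure from `x` :  at each step
the external edge of minimal `τ`-value is added to the tree, the procedure stops as soon as an
initially red vertex is added, and `R` is that first (and only) invaded initially red
vertex, added at the last step. -/
def StoppedInvasion (G : SimpleGraph V) (c : V → Color) (τ : Sym2 V → ℝ) (x : V)
    (E : ℕ → Sym2 V) (m : ℕ) (R : V) : Prop :=
  0 < m ∧ (∀ n < m, InvStep G τ x E n) ∧
  (∀ n < m, ∀ v ∈ E n, v ∉ treeVerts x E n → (c v = Color.red ↔ n = m - 1)) ∧
  R ∈ E (m - 1) ∧ R ∉ treeVerts x E (m - 1) ∧ c R = Color.red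


/-!
Let `ρ v` be the bottleneck cost of reaching `R` from `v` inside the induced tree `T̂(x)`. In every
evolution a vertex `v` of `T(x)` is green before time `ρ v` and red from then on, and an edge `e`
of `T̂(x)` is open at time `t` iff `τ e ≤ t` and `τ e` is at most the bottleneck of one of its
end-vertices; this description involves only the colours and `τ`-values of `T̂(x)`. Red cannot
enter `T(x)` earlier from outside, because by Prim's property of invasion every edge leaving
`T(x)` away from `R` is at least as expensive as the bottleneck of its inner end-vertex. The
description is then established by continuous induction on time.
-/

open Filter Topology

section Bottleneck

variable {G : SimpleGraph V} (H : G.Subgraph) (τ : Sym2 V → ℝ) (R : V)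

def cheapGraph (b : ℝ) : SimpleGraph V where
  Adj p q := H.Adj p q ∧ τ s(p, q) ≤ b
  symm.symm _ _ h := ⟨h.1.symm, Sym2.eq_swap ▸ h.2⟩
  loopless.irrefl _ h := G.irrefl h.1.adj_sub

noncomputable def bottleneck (v : V) : ℝ :=
  sInf {b | 0 ≤ b ∧ (cheapGraph H τ b).Reachable v R}

variable {H τ R}

theorem cheapGraph_mono {b b' : ℝ} (h : b ≤ b') : cheapGraph H τ b ≤ cheapGraph H τ b' :=
  fun _ _ hpq => ⟨hpq.1, hpq.2.trans h⟩

theorem bottleneck_nonneg (v : V) : 0 ≤ bottleneck H τ R v :=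
  Real.sInf_nonneg fun _ hb => hb.1

theorem bottleneck_le {v : V} {b : ℝ} (hb : 0 ≤ b) (hv : (cheapGraph H τ b).Reachable v R) :
    bottleneck H τ R v ≤ b :=
  csInf_le ⟨0, fun _ hb => hb.1⟩ ⟨hb, hv⟩

@[simp] theorem bottleneck_self : bottleneck H τ R R = 0 :=
  le_antisymm (bottleneck_le le_rfl .rfl) (bottleneck_nonneg R)

theorem exists_cheapGraph_eq [Finite V] {b : ℝ} (hb : 0 ≤ b) :
    ∃ b' ∈ insert 0 (range τ), 0 ≤ b' ∧ b' ≤ b ∧ cheapGraph H τ b' = cheapGraph H τ b := by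
  set L := {ℓ ∈ insert 0 (range τ) | ℓ ≤ b}
  have hL : L.Finite := ((finite_range τ).insert 0).subset fun _ h => h.1
  obtain ⟨b', ⟨hb'τ, hb'b⟩, hmax⟩ := Set.exists_max_image L id hL ⟨0, mem_insert 0 _, hb⟩
  refine ⟨b', hb'τ, hmax 0 ⟨mem_insert 0 _, hb⟩, hb'b,
    le_antisymm (cheapGraph_mono hb'b) fun p q hpq => ⟨hpq.1, ?_⟩⟩
  exact hmax _ ⟨mem_insert_of_mem _ ⟨_, rfl⟩, hpq.2⟩

/-- The infimum defining the bottleneck is attained, since only the finitely many values of `τ`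
matter. -/
theorem bottleneck_spec [Finite V] {v : V}
    (hv : ∃ b, 0 ≤ b ∧ (cheapGraph H τ b).Reachable v R) :
    (cheapGraph H τ (bottleneck H τ R v)).Reachable v R := by
  set B := {b | 0 ≤ b ∧ (cheapGraph H τ b).Reachable v R}
  have level : ∀ b ∈ B, ∃ b' ∈ B ∩ insert 0 (range τ), b' ≤ b := by
    rintro b ⟨hb, hvb⟩
    obtain ⟨b', hb'τ, hb'0, hb'b, heq⟩ := exists_cheapGraph_eq (H := H) hb
    exact ⟨b', ⟨⟨hb'0, heq ▸ hvb⟩, hb'τ⟩, hb'b⟩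
  have hfin : (B ∩ insert 0 (range τ)).Finite := ((finite_range τ).insert 0).inter_of_right B
  obtain ⟨b, hb⟩ := hv
  obtain ⟨b₀, hb₀, hmin⟩ := Set.exists_min_image _ id hfin
    (let ⟨b', hb', _⟩ := level b hb; ⟨b', hb'⟩)
  have hleast : IsLeast B b₀ := ⟨hb₀.1, fun b hb =>
    let ⟨b', hb', hb'b⟩ := level b hb; (hmin b' hb').trans hb'b⟩
  exact (hleast.csInf_eq ▸ hleast.1).2

theorem bottleneck_le_max [Finite V] {p q : V} (hpq : H.Adj p q)
    (hq : ∃ b, 0 ≤ b ∧ (cheapGraph H τ b).Reachable q R) :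
    bottleneck H τ R p ≤ τ s(p, q) ⊔ bottleneck H τ R q :=
  bottleneck_le (le_sup_of_le_right (bottleneck_nonneg q))
    (SimpleGraph.Adj.reachable (G := cheapGraph H τ _) ⟨hpq, le_sup_left⟩ |>.trans
      ((bottleneck_spec hq).mono (cheapGraph_mono le_sup_right)))

/-- Follow a cheapest path from `v` while the bottleneck stays equal to that of `v`, and recurse
from the first vertex where it drops. -/
theorem reflTransGen_of_bottleneck_le [Finite V] {t : ℝ} {v : V}
    (hv : ∃ b, 0 ≤ b ∧ (cheapGraph H τ b).Reachable v R) (ht : bottleneck H τ R v ≤ t) :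
    Relation.ReflTransGen (fun p q => H.Adj p q ∧ τ s(p, q) ≤ t ∧
      τ s(p, q) ≤ bottleneck H τ R p ⊔ bottleneck H τ R q) v R := by
  set ρ := bottleneck H τ R
  have wf : WellFounded (fun u w : V => ρ u < ρ w) := by
    have : IsTrans V (fun u w => ρ u < ρ w) := ⟨fun _ _ _ => lt_trans⟩
    have : Std.Irrefl (fun u w : V => ρ u < ρ w) := ⟨fun _ => lt_irrefl _⟩
    exact Finite.wellFounded_of_trans_of_irrefl _
  induction v using wf.induction with
  | _ v ih =>
  suffices ∀ p, Relation.ReflTransGen (cheapGraph H τ (ρ v)).Adj p R → ρ p = ρ v →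
      Relation.ReflTransGen (fun p q => H.Adj p q ∧ τ s(p, q) ≤ t ∧ τ s(p, q) ≤ ρ p ⊔ ρ q) p R from
    this v ((SimpleGraph.reachable_iff_reflTransGen _ _).1 (bottleneck_spec hv)) rfl
  intro p hp
  induction hp using Relation.ReflTransGen.head_induction_on with
  | refl => exact fun _ => .refl
  | @head p q hpq hqR ihq =>
    intro hp
    have hqR' := (SimpleGraph.reachable_iff_reflTransGen _ _).2 hqR
    have hq : ρ q ≤ ρ v := bottleneck_le (bottleneck_nonneg v) hqR'
    refine .head ⟨hpq.1, hpq.2.trans ht, le_sup_of_le_left (hp ▸ hpq.2)⟩ ?_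
    rcases hq.lt_or_eq with hlt | heq
    · exact ih q hlt ⟨_, bottleneck_nonneg v, hqR'⟩ (hlt.le.trans ht)
    · exact ihq heq

end Bottleneck

section InvasionTree

variable {G : SimpleGraph V} {τ : Sym2 V → ℝ} {x : V} {E : ℕ → Sym2 V} {m n : ℕ}

theorem treeVerts_zero : treeVerts x E 0 = {x} := by
  simp [treeVerts]

theorem mem_treeVerts_succ {v : V} :
    v ∈ treeVerts x E (n + 1) ↔ v ∈ treeVerts x E n ∨ v ∈ E n := by
  simp only [treeVerts, mem_union, mem_iUnion, mem_ofPred_eq, exists_prop, Nat.lt_succ_iff_lt_or_eq]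
  grind

theorem treeVerts_mono : Monotone (treeVerts x E) :=
  monotone_nat_of_le_succ fun _ _ hv => mem_treeVerts_succ.2 (.inl hv)

theorem InvStep.exists_eq (h : InvStep G τ x E n) :
    ∃ p u, E n = s(p, u) ∧ p ∈ treeVerts x E n ∧ u ∉ treeVerts x E n := by
  obtain ⟨hE, ⟨p, ⟨hp, hpT⟩, huniq⟩, -⟩ := h
  refine ⟨p, Sym2.Mem.other hp, (Sym2.other_spec hp).symm, hpT, fun huT => ?_⟩
  have hup : Sym2.Mem.other hp = p := huniq _ ⟨Sym2.other_mem hp, huT⟩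
  rw [← Sym2.other_spec hp, hup] at hE
  exact G.irrefl hE

theorem InvStep.eq_of_not_mem (h : InvStep G τ x E n) {u v : V} (hu : u ∈ E n)
    (huT : u ∉ treeVerts x E n) (hv : v ∈ E n) (hvT : v ∉ treeVerts x E n) : u = v := by
  obtain ⟨p, w, hE, hp, -⟩ := h.exists_eq
  rw [hE, Sym2.mem_iff] at hu hv
  grind

theorem InvStep.le_of_adj (h : InvStep G τ x E n) {a w : V} (haw : G.Adj a w)
    (ha : a ∈ treeVerts x E n) (hw : w ∉ treeVerts x E n) : τ (E n) ≤ τ s(a, w) :=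
  h.2.2 _ haw ⟨a, ⟨Sym2.mem_mk_left a w, ha⟩, fun _ ⟨hv, hvT⟩ =>
    (Sym2.mem_iff.1 hv).resolve_right fun h => hw (h ▸ hvT)⟩

/-- Prim's property of invasion. By induction on `k`, each of `a`, `a'` is cheaply joined to the
vertex added at step `k - 1`: either it is that vertex, or the step was cheap and the induction
hypothesis joins it to the old end of `E (k - 1)`. -/
theorem reachable_cheapGraph_of_invStep (hstep : ∀ n < m, InvStep G τ x E n) {b : ℝ} :
    ∀ k ≤ m, ∀ a ∈ treeVerts x E k, ∀ a' ∈ treeVerts x E k,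
      (∀ j < k, a ∈ treeVerts x E j → τ (E j) ≤ b) →
      (∀ j < k, a' ∈ treeVerts x E j → τ (E j) ≤ b) →
      (cheapGraph ((⊤ : G.Subgraph).induce (treeVerts x E m)) τ b).Reachable a a' := by
  intro k
  induction k with
  | zero =>
    intro _ a ha a' ha' _ _
    rw [treeVerts_zero, mem_singleton_iff] at ha ha'
    rw [ha, ha']
  | succ k ih =>
    intro hk
    obtain ⟨p, u, hE, hp, hu⟩ := (hstep k hk).exists_eq
    have hpu : G.Adj p u := by simpa [hE] using (hstep k hk).1
    have hmem {v : V} (hv : v ∈ E k) : v ∈ treeVerts x E m :=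
      treeVerts_mono hk (mem_treeVerts_succ.2 (.inr hv))
    suffices key : ∀ a ∈ treeVerts x E (k + 1),
        (∀ j < k + 1, a ∈ treeVerts x E j → τ (E j) ≤ b) →
        (cheapGraph ((⊤ : G.Subgraph).induce (treeVerts x E m)) τ b).Reachable a u from
      fun a ha a' ha' hca hca' => (key a ha hca).trans (key a' ha' hca').symm
    intro a ha hca
    by_cases haT : a ∈ treeVerts x E k
    · have hτk : τ (E k) ≤ b := hca k k.lt_succ_self haT
      have hcheap : (cheapGraph ((⊤ : G.Subgraph).induce (treeVerts x E m)) τ b).Adj p u :=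
        ⟨⟨hmem (hE ▸ Sym2.mem_mk_left p u), hmem (hE ▸ Sym2.mem_mk_right p u), hpu⟩, hE ▸ hτk⟩
      refine (ih (by omega) a haT p hp (fun j hj => hca j (hj.trans k.lt_succ_self))
        (fun j hj hpj => ?_)).trans hcheap.reachable
      exact ((hstep j (by omega)).le_of_adj hpu hpj fun h => hu (treeVerts_mono hj.le h)).trans
        (hE ▸ hτk)
    · have haE := (mem_treeVerts_succ.1 ha).resolve_left haT
      rw [(hstep k hk).eq_of_not_mem haE haT (hE ▸ Sym2.mem_mk_right p u) hu]

end InvasionTree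

/-- Red entering `S` through an edge leaving it comes too late to matter: such an edge is no
cheaper than the bottleneck from its inner end-vertex to `R`. -/
structure IsShielded (G : SimpleGraph V) (τ : Sym2 V → ℝ) (S : Set V) (R : V) : Prop where
  mem : R ∈ S
  reachable : ∀ v ∈ S, ∃ b, 0 ≤ b ∧ (cheapGraph ((⊤ : G.Subgraph).induce S) τ b).Reachable v R
  bottleneck_le : ∀ u ∈ S, ∀ w ∉ S, G.Adj u w →
    bottleneck ((⊤ : G.Subgraph).induce S) τ R u ≤ τ s(u, w)

namespace StoppedInvasion

variable {G : SimpleGraph V} {c : V → Color} {τ : Sym2 V → ℝ} {x : V} {E : ℕ → Sym2 V}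
  {m : ℕ} {R : V}

theorem mem_treeVerts (hinv : StoppedInvasion G c τ x E m R) : R ∈ treeVerts x E m := by
  obtain ⟨hm, -, -, hRE, -⟩ := hinv
  have := (mem_treeVerts_succ (n := m - 1) (x := x)).2 (.inr hRE)
  rwa [Nat.sub_add_cancel hm] at this

theorem isShielded [Finite V] (hinv : StoppedInvasion G c τ x E m R)
    (hτpos : ∀ e ∈ G.edgeSet, 0 < τ e) : IsShielded G τ (treeVerts x E m) R := by
  have hRm := hinv.mem_treeVerts
  obtain ⟨-, hstep, -, -, hRT, -⟩ := hinv
  have hRcheap (b : ℝ) : ∀ j < m, R ∈ treeVerts x E j → τ (E j) ≤ b :=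
    fun j hj hRj => absurd (treeVerts_mono (by omega : j ≤ m - 1) hRj) hRT
  refine ⟨hRm, fun v hv => ?_, fun u hu w hw huw => ?_⟩
  · obtain ⟨b, hb⟩ := (finite_range τ).bddAbove
    exact ⟨max b 0, le_max_right _ _, reachable_cheapGraph_of_invStep hstep m le_rfl v hv R hRm
      (fun j _ _ => (hb ⟨_, rfl⟩).trans (le_max_left _ _)) (hRcheap _)⟩
  · exact bottleneck_le (hτpos _ huw).le (reachable_cheapGraph_of_invStep hstep m le_rfl u hu R hRm
      (fun j hj huj => (hstep j hj).le_of_adj huw huj fun h => hw (treeVerts_mono hj.le h))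
      (hRcheap _))

theorem eq_green (hinv : StoppedInvasion G c τ x E m R) (hx : c x = Color.green)
    (hnw : ∀ v, c v ≠ Color.white) : ∀ v ∈ treeVerts x E m, v ≠ R → c v = Color.green := by
  obtain ⟨-, hstep, hnew, hRE, hRT, -⟩ := hinv
  suffices ∀ n ≤ m, ∀ v ∈ treeVerts x E n, v ≠ R → c v = Color.green from this m le_rfl
  intro n
  induction n with
  | zero =>
    intro _ v hv _
    rw [treeVerts_zero, mem_singleton_iff] at hv
    rwa [hv]
  | succ n ih =>
    intro hn v hv hvR
    by_cases hvT : v ∈ treeVerts x E n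
    · exact ih (by omega) v hvT hvR
    have hvE := (mem_treeVerts_succ.1 hv).resolve_left hvT
    have hnm : n ≠ m - 1 := by
      rintro rfl
      exact hvR ((hstep _ (by omega)).eq_of_not_mem hvE hvT hRE hRT)
    match hcv : c v with
    | .green => rfl
    | .red => exact absurd ((hnew n (by omega) v hvE hvT).1 hcv) hnm
    | .white => exact absurd hcv (hnw v)

end StoppedInvasion

theorem forall_nonneg_of_forall_lt_imp_eventually {P : ℝ → Prop}
    (h : ∀ t, 0 ≤ t → (∀ s, 0 ≤ s → s < t → P s) → ∀ᶠ s in 𝓝[≥] t, P s) :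
    ∀ t, 0 ≤ t → P t := by
  by_contra! hbad
  set B := {t | 0 ≤ t ∧ ¬ P t}
  have hB : BddBelow B := ⟨0, fun _ h => h.1⟩
  have hne : B.Nonempty := hbad
  have hbelow : ∀ s, 0 ≤ s → s < sInf B → P s := fun s hs hsT =>
    by_contra fun hPs => (csInf_le hB ⟨hs, hPs⟩).not_gt hsT
  obtain ⟨u, hTu, hu⟩ := mem_nhdsGE_iff_exists_Ico_subset.1
    (h _ (le_csInf hne fun _ h => h.1) hbelow)
  obtain ⟨b, hb, hbu⟩ := (csInf_lt_iff hB hne).1 hTu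
  exact hb.2 (hu ⟨csInf_le hB hb, hbu⟩)

/-- `f t` is the time before `t` during which an edge has a green end-vertex, which stops
growing at time `M`. -/
theorem eventually_ofReal_le_iff {f : ℝ → ℝ≥0∞} {a M T : ℝ} (hT : 0 ≤ T) (hM : 0 ≤ M)
    (hfT : f T = ENNReal.ofReal (min T M)) (hmono : ∀ t, T ≤ t → f T ≤ f t)
    (hgrowth : ∀ t, T ≤ t → f t ≤ f T + ENNReal.ofReal (t - T)) :
    ∀ᶠ t in 𝓝[≥] T, (ENNReal.ofReal a ≤ f t ↔ a ≤ t ∧ a ≤ M) := by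
  rcases le_or_gt a (min T M) with ha | ha
  · filter_upwards [self_mem_nhdsWithin] with t ht
    exact iff_of_true ((ENNReal.ofReal_le_ofReal ha).trans (hfT ▸ hmono t ht))
      ⟨(ha.trans (min_le_left _ _)).trans ht, ha.trans (min_le_right _ _)⟩
  · have hmin : 0 ≤ min T M := le_min hT hM
    filter_upwards [Ico_mem_nhdsGE (show T < T + (a - min T M) by linarith)] with t ⟨hTt, htε⟩
    refine iff_of_false (fun hle => ?_) fun ⟨hat, haM⟩ => ?_
    · have := hle.trans (hgrowth t hTt)
      rw [hfT, ← ENNReal.ofReal_add hmin (by linarith),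
        ENNReal.ofReal_le_ofReal_iff (by linarith)] at this
      linarith
    · rcases min_cases T M with ⟨h, -⟩ | ⟨h, -⟩ <;> linarith

section GreenTouch

variable (col : ℝ → V → Color) (e : Sym2 V)

theorem volume_greenTouch_mono {T t : ℝ} (h : T ≤ t) :
    volume {s | 0 ≤ s ∧ s < T ∧ greenTouch col s e} ≤
      volume {s | 0 ≤ s ∧ s < t ∧ greenTouch col s e} :=
  measure_mono fun _ ⟨h0, hsT, hg⟩ => ⟨h0, hsT.trans_le h, hg⟩

theorem volume_greenTouch_le_add {T t : ℝ} :
    volume {s | 0 ≤ s ∧ s < t ∧ greenTouch col s e} ≤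
      volume {s | 0 ≤ s ∧ s < T ∧ greenTouch col s e} + ENNReal.ofReal (t - T) :=
  calc volume {s | 0 ≤ s ∧ s < t ∧ greenTouch col s e}
        ≤ volume ({s | 0 ≤ s ∧ s < T ∧ greenTouch col s e} ∪ Ico T t) :=
        measure_mono fun s ⟨h0, hst, hg⟩ =>
          if hsT : s < T then .inl ⟨h0, hsT, hg⟩ else .inr ⟨not_lt.1 hsT, hst⟩
    _ ≤ _ := (measure_union_le _ _).trans_eq (by rw [Real.volume_Ico])

end GreenTouch

noncomputable def predCol (ρ : V → ℝ) (t : ℝ) (v : V) : Color :=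
  if ρ v ≤ t then Color.red else Color.green

/-- The clock of `e` runs while some end-vertex is green, i.e. up to time `(e.map ρ).sup`. -/
def predOpen (τ : Sym2 V → ℝ) (ρ : V → ℝ) (t : ℝ) (e : Sym2 V) : Prop :=
  τ e ≤ t ∧ τ e ≤ (e.map ρ).sup

theorem predCol_eq_green_iff {ρ : V → ℝ} {t : ℝ} {v : V} :
    predCol ρ t v = Color.green ↔ t < ρ v := by
  unfold predCol
  split_ifs with h <;> simpa using h

theorem setOf_greenTouch_eq {col : ℝ → V → Color} {ρ : V → ℝ} {t : ℝ} {e : Sym2 V}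
    (hcol : ∀ s, 0 ≤ s → s < t → ∀ v ∈ e, col s v = predCol ρ s v) :
    {s | 0 ≤ s ∧ s < t ∧ greenTouch col s e} = Ico 0 (min t (e.map ρ).sup) := by
  ext s
  simp only [mem_ofPred_eq, mem_Ico, lt_min_iff]
  refine and_congr_right fun h0 => and_congr_right fun hst => ?_
  induction e using Sym2.ind with
  | _ a b =>
  have ha := hcol s h0 hst a (Sym2.mem_mk_left a b)
  have hb := hcol s h0 hst b (Sym2.mem_mk_right a b)
  simp [greenTouch, ha, hb, predCol_eq_green_iff]

namespace Evolution

variable {G : SimpleGraph V} {A : G.Subgraph} {c : V → Color} {τ : Sym2 V → ℝ}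
  (ev : Evolution A c τ)

theorem le_of_opn {t : ℝ} {e : Sym2 V} (ht : 0 ≤ t) (he : ev.opn t e) : τ e ≤ t := by
  have hA : e ∈ A.edgeSet := by_contra fun h => ev.closed_outside t e h he
  have := ((ev.open_iff t ht e hA).1 he).trans
    (measure_mono (s := {s | 0 ≤ s ∧ s < t ∧ _}) (t := Ico 0 t) fun _ hs => ⟨hs.1, hs.2.1⟩)
  rwa [Real.volume_Ico, sub_zero, ENNReal.ofReal_le_ofReal_iff ht] at this

theorem eventually_opn_iff_predOpen [Finite V] {H : G.Subgraph} (hH : H ≤ A) {τ₀ : Sym2 V → ℝ}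
    (hτ : ∀ e ∈ H.edgeSet, τ e = τ₀ e) {ρ : V → ℝ} (hρ : ∀ v, 0 ≤ ρ v) {T : ℝ} (hT : 0 ≤ T)
    (hcol : ∀ s, 0 ≤ s → s < T → ∀ v ∈ H.verts, ev.col s v = predCol ρ s v) :
    ∀ᶠ t in 𝓝[≥] T, ∀ e ∈ H.edgeSet, (ev.opn t e ↔ predOpen τ₀ ρ t e) := by
  refine (toFinite H.edgeSet).eventually_all.2 fun e he => ?_
  have hM : 0 ≤ (e.map ρ).sup := by
    induction e using Sym2.ind with
    | _ a b => exact le_sup_of_le_left (hρ a)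
  have hfT : volume {s | 0 ≤ s ∧ s < T ∧ greenTouch ev.col s e} =
      ENNReal.ofReal (min T (e.map ρ).sup) := by
    rw [setOf_greenTouch_eq fun s h0 hsT v hv =>
      hcol s h0 hsT v (H.mem_verts_of_mem_edge he hv), Real.volume_Ico, sub_zero]
  filter_upwards [self_mem_nhdsWithin, eventually_ofReal_le_iff hT hM hfT
    (fun _ => volume_greenTouch_mono ev.col e) (fun _ _ => volume_greenTouch_le_add ev.col e)]
    with t hTt hiff
  rw [ev.open_iff t (hT.trans hTt) e (SimpleGraph.Subgraph.edgeSet_mono hH he), hτ e he, hiff]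
  rfl

end Evolution

namespace Evolution

variable {G : SimpleGraph V} {τ : Sym2 V → ℝ} {S : Set V} {R : V} {G₀ : G.Subgraph}
  {c' : V → Color} {τ' : Sym2 V → ℝ} (ev : Evolution G₀ c' τ')

theorem bottleneck_le_of_col_eq_red [Finite V] (hS : IsShielded G τ S R)
    (hle : (⊤ : G.Subgraph).induce S ≤ G₀)
    (hτ : ∀ e ∈ ((⊤ : G.Subgraph).induce S).edgeSet, τ' e = τ e)
    (hτout : ∀ u ∈ S, u ≠ R → ∀ w ∉ S, G.Adj u w → τ' s(u, w) = τ s(u, w))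
    (hc' : ∀ v ∈ S, v ≠ R → c' v = Color.green) {t : ℝ} (ht : 0 ≤ t) {v : V} (hv : v ∈ S)
    (hred : ev.col t v = Color.red) :
    bottleneck ((⊤ : G.Subgraph).induce S) τ R v ≤ t := by
  obtain ⟨w, hvw, hw⟩ := (ev.red_iff t ht v (hle.1 hv)).1 hred
  clear hred
  revert hv
  induction hvw using Relation.ReflTransGen.head_induction_on with
  | refl =>
    intro hwS
    by_cases hwR : w = R
    · simpa [hwR] using ht
    · simp [hc' w hwS hwR] at hw
  | @head p a hpa _ ih =>
    intro hp
    by_cases hpR : p = R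
    · simpa [hpR] using ht
    have hGpa : G.Adj p a := hpa.1.adj_sub
    have hτt : τ' s(p, a) ≤ t := ev.le_of_opn ht hpa.2
    by_cases ha : a ∈ S
    · have hH : ((⊤ : G.Subgraph).induce S).Adj p a := ⟨hp, ha, hGpa⟩
      exact (bottleneck_le_max hH (hS.reachable a ha)).trans (sup_le (hτ s(p, a) hH ▸ hτt) (ih ha))
    · exact (hS.bottleneck_le p hp a ha hGpa).trans (hτout p hp hpR a ha hGpa ▸ hτt)

theorem col_eq_predCol [Finite V] (hS : IsShielded G τ S R)
    (hle : (⊤ : G.Subgraph).induce S ≤ G₀)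
    (hτ : ∀ e ∈ ((⊤ : G.Subgraph).induce S).edgeSet, τ' e = τ e)
    (hτout : ∀ u ∈ S, u ≠ R → ∀ w ∉ S, G.Adj u w → τ' s(u, w) = τ s(u, w))
    (hc'R : c' R = Color.red) (hc' : ∀ v ∈ S, v ≠ R → c' v = Color.green) {t : ℝ} (ht : 0 ≤ t)
    (hopn : ∀ e ∈ ((⊤ : G.Subgraph).induce S).edgeSet,
      (ev.opn t e ↔ predOpen τ (bottleneck ((⊤ : G.Subgraph).induce S) τ R) t e))
    {v : V} (hv : v ∈ S) :
    ev.col t v = predCol (bottleneck ((⊤ : G.Subgraph).induce S) τ R) t v := by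
  unfold predCol
  split_ifs with hρv
  · refine (ev.red_iff t ht v (hle.1 hv)).2 ⟨R, ?_, hc'R⟩
    exact Relation.ReflTransGen.mono (fun p q h => ⟨hle.2 h.1, (hopn s(p, q) h.1).2 h.2⟩) _ _
      (reflTransGen_of_bottleneck_le (hS.reachable v hv) hρv)
  · have hvR : v ≠ R := by
      rintro rfl
      exact hρv (by simpa using ht)
    match hcol : ev.col t v with
    | .green => rfl
    | .red => exact absurd (ev.bottleneck_le_of_col_eq_red hS hle hτ hτout hc' ht hv hcol) hρv
    | .white =>
      have := ((ev.white_iff t ht v (hle.1 hv)).1 hcol).1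
      simp [hc' v hv hvR] at this

/-- Before `t`, colours follow `predCol`; then opening clocks of edges of `S` follow `predOpen`
a little beyond `t`, and so colours follow `predCol` a little beyond `t`. -/
theorem col_eq_predCol_and_opn_iff [Finite V] (hS : IsShielded G τ S R)
    (hle : (⊤ : G.Subgraph).induce S ≤ G₀)
    (hτ : ∀ e ∈ ((⊤ : G.Subgraph).induce S).edgeSet, τ' e = τ e)
    (hτout : ∀ u ∈ S, u ≠ R → ∀ w ∉ S, G.Adj u w → τ' s(u, w) = τ s(u, w))
    (hc'R : c' R = Color.red) (hc' : ∀ v ∈ S, v ≠ R → c' v = Color.green) {t : ℝ}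
    (ht : 0 ≤ t) :
    (∀ v ∈ S, ev.col t v = predCol (bottleneck ((⊤ : G.Subgraph).induce S) τ R) t v) ∧
      ∀ e ∈ ((⊤ : G.Subgraph).induce S).edgeSet,
        (ev.opn t e ↔ predOpen τ (bottleneck ((⊤ : G.Subgraph).induce S) τ R) t e) := by
  have hcol := forall_nonneg_of_forall_lt_imp_eventually fun T hT hbelow => by
    filter_upwards [self_mem_nhdsWithin,
      ev.eventually_opn_iff_predOpen hle hτ bottleneck_nonneg hT hbelow] with t hTt hopn
    exact fun v hv => ev.col_eq_predCol hS hle hτ hτout hc'R hc' (hT.trans hTt) hopn hv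
  exact ⟨hcol t ht, (ev.eventually_opn_iff_predOpen hle hτ bottleneck_nonneg ht
    fun s hs _ => hcol s hs).self_of_nhdsWithin self_mem_Ici⟩

end Evolution

theorem statement9_general
    {V : Type*} [Fintype V] (G : SimpleGraph V)
    (c : V → Color) (hnw : ∀ v, c v ≠ Color.white)
    (τ : Sym2 V → ℝ) (hτpos : ∀ e ∈ G.edgeSet, 0 < τ e)
    (x : V) (hx : c x = Color.green)
    (E : ℕ → Sym2 V) (m : ℕ) (R : V) (hinv : StoppedInvasion G c τ x E m R) :
    Autonomous G c τ ((⊤ : G.Subgraph).induce (treeVerts x E m))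
      {e | e ∈ G.edgeSet ∧ ∃ u v : V, e = s(u, v) ∧
        u ∈ treeVerts x E m ∧ u ≠ R ∧ v ∉ treeVerts x E m} := by
  set ρ := bottleneck ((⊤ : G.Subgraph).induce (treeVerts x E m)) τ R
  have hS := hinv.isShielded hτpos
  have hgreen := hinv.eq_green hx hnw
  have hcR : c R = Color.red := hinv.2.2.2.2.2
  refine ⟨toFinite _, toFinite _, ?_, predCol ρ, predOpen τ ρ, ?_⟩
  · rintro e ⟨he, u, v, rfl, hu, -, hv⟩
    refine ⟨he, u, ⟨Sym2.mem_mk_left u v, hu⟩, fun w ⟨hw, hwT⟩ => ?_⟩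
    rcases Sym2.mem_iff.1 hw with rfl | rfl
    · rfl
    · exact absurd hwT hv
  · intro G₀ _ hle _ c' τ' hc' hτ' ev
    have hdyn t (ht : 0 ≤ t) := ev.col_eq_predCol_and_opn_iff hS hle
      (fun e he => hτ' e (.inl he))
      (fun u hu huR w hw huw => hτ' _ (.inr ⟨huw, u, w, rfl, hu, huR, hw⟩))
      ((hc' R hS.mem).trans hcR)
      (fun v hv hvR => (hc' v hv).trans (hgreen v hv hvR)) ht
    exact ⟨fun t ht => (hdyn t ht).1, fun t ht => (hdyn t ht).2⟩

/-- In the finite growth model with no white vertices, the pair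
`(T̂(x), Ē)` — the subgraph of `G` induced on the vertex set of the stopped invasion tree
`T(x)`, together with the set of edges of `G` having exactly one end-vertex in `T(x)`, that
end-vertex different from `R` — is autonomous. -/
theorem statement9
    {V : Type*} [Fintype V] (G : SimpleGraph V) (hconn : G.Connected)
    (c : V → Color) (hnw : ∀ v, c v ≠ Color.white)
    (hg : ∃ v, c v = Color.green) (hr : ∃ v, c v = Color.red)
    (τ : Sym2 V → ℝ) (hτpos : ∀ e ∈ G.edgeSet, 0 < τ e)
    (hτinj : ∀ e ∈ G.edgeSet, ∀ f ∈ G.edgeSet, τ e = τ f → e = f)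
    (x : V) (hx : c x = Color.green)
    (E : ℕ → Sym2 V) (m : ℕ) (R : V) (hinv : StoppedInvasion G c τ x E m R) :
    Autonomous G c τ ((⊤ : G.Subgraph).induce (treeVerts x E m))
      {e | e ∈ G.edgeSet ∧ ∃ u v : V, e = s(u, v) ∧
        u ∈ treeVerts x E m ∧ u ≠ R ∧ v ∉ treeVerts x E m} :=
  statement9_general G c hnw τ hτpos x hx E m R hinv
end RandomSpatialGrowth
end

section
/- In the finite growth model with no white vertices, for an initially green vertex x, the time t(x) at which x becomes red satisfies t(x) = min over all paths π in G from x to an initially red vertex of (max over edges e of π of τ(e)). -/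
open MeasureTheory ProbabilityTheory Set
open scoped ENNReal

namespace RandomSpatialGrowth

variable {V : Type*}

/-!
Take a walk from `x` to an initially red vertex all of whose edges have `τ ≤ t`. By induction
from the red end, every vertex of the walk is red at time `t`: a vertex that was not red before
`t` was green throughout `[0, t)`, so the next edge towards the red end had a green end-vertex
for a time `t ≥ τ` and is open at `t`. Hence `t(x)` is at most the bottleneck of every such walk.
Conversely, at time `t(x)` the vertex `x` is joined by open edges to an initially red vertex;
open edges have `τ ≤ t(x)`, so the bottleneck of this walk is at most, hence equal to, `t(x)`.
-/

theorem _root_.SimpleGraph.Walk.exists_isGreatest_image_edges {α β : Type*} [LinearOrder β]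
    {G : SimpleGraph α} {u v : α} (p : G.Walk u v) (huv : u ≠ v) (f : Sym2 α → β) :
    ∃ e ∈ p.edges, IsGreatest (f '' {e | e ∈ p.edges}) (f e) := by
  have hne : {e | e ∈ p.edges}.Nonempty :=
    List.exists_mem_of_ne_nil _ fun h => huv (SimpleGraph.Walk.edges_eq_nil.1 h).eq
  obtain ⟨e, he, hmax⟩ := Set.exists_max_image _ f (List.finite_toSet _) hne
  exact ⟨e, he, mem_image_of_mem f he, forall_mem_image.2 hmax⟩

namespace Evolution

variable {G : SimpleGraph V} {A : G.Subgraph} {c : V → Color} {τ : Sym2 V → ℝ}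
  (ev : Evolution A c τ)

theorem col_eq_green_of_ne_red (hnw : ∀ v, c v ≠ Color.white) {t : ℝ} (ht : 0 ≤ t) {v : V}
    (hv : v ∈ A.verts) (h : ev.col t v ≠ Color.red) : ev.col t v = Color.green := by
  cases hcol : ev.col t v with
  | white => exact absurd ((ev.white_iff t ht v hv).1 hcol).1 (hnw v)
  | red => exact absurd hcol h
  | green => rfl

theorem opn_mono {s t : ℝ} (hs : 0 ≤ s) (hst : s ≤ t) {e : Sym2 V} (h : ev.opn s e) :
    ev.opn t e := by
  by_cases he : e ∈ A.edgeSet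
  · rw [ev.open_iff s hs e he] at h
    rw [ev.open_iff t (hs.trans hst) e he]
    exact h.trans (measure_mono fun r ⟨h0, hrs, hg⟩ => ⟨h0, hrs.trans_le hst, hg⟩)
  · exact absurd h (ev.closed_outside s e he)

theorem col_red_mono {s t : ℝ} (hs : 0 ≤ s) (hst : s ≤ t) {v : V} (hv : v ∈ A.verts)
    (h : ev.col s v = Color.red) : ev.col t v = Color.red := by
  obtain ⟨w, hvw, hw⟩ := (ev.red_iff s hs v hv).1 h
  exact (ev.red_iff t (hs.trans hst) v hv).2
    ⟨w, Relation.ReflTransGen.mono (fun _ _ hab => ⟨hab.1, ev.opn_mono hs hst hab.2⟩) _ _ hvw, hw⟩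

theorem tau_le_of_opn {t : ℝ} (ht : 0 ≤ t) {e : Sym2 V} (he : e ∈ A.edgeSet)
    (h : ev.opn t e) : τ e ≤ t := by
  refine (ENNReal.ofReal_le_ofReal_iff ht).1 ?_
  calc ENNReal.ofReal (τ e)
      ≤ volume {s : ℝ | 0 ≤ s ∧ s < t ∧ greenTouch ev.col s e} := (ev.open_iff t ht e he).1 h
    _ ≤ volume (Ico 0 t) := measure_mono fun r hr => ⟨hr.1, hr.2.1⟩
    _ = ENNReal.ofReal t := by rw [Real.volume_Ico, sub_zero]

theorem opn_of_forall_greenTouch {t : ℝ} (ht : 0 ≤ t) {e : Sym2 V} (he : e ∈ A.edgeSet)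
    (hτ : τ e ≤ t) (hg : ∀ s, 0 ≤ s → s < t → greenTouch ev.col s e) : ev.opn t e := by
  have hset : {s : ℝ | 0 ≤ s ∧ s < t ∧ greenTouch ev.col s e} = Ico 0 t :=
    Set.ext fun s => ⟨fun hs => ⟨hs.1, hs.2.1⟩, fun hs => ⟨hs.1, hs.2, hg s hs.1 hs.2⟩⟩
  rw [ev.open_iff t ht e he, hset, Real.volume_Ico, sub_zero]
  exact ENNReal.ofReal_le_ofReal hτ

theorem col_red_of_adj_of_opn {t : ℝ} (ht : 0 ≤ t) {u v : V} (huv : A.Adj u v)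
    (hopn : ev.opn t s(u, v)) (hv : ev.col t v = Color.red) : ev.col t u = Color.red := by
  obtain ⟨w, hvw, hw⟩ := (ev.red_iff t ht v huv.snd_mem).1 hv
  exact (ev.red_iff t ht u huv.fst_mem).2 ⟨w, .head ⟨huv, hopn⟩ hvw, hw⟩

theorem exists_walk_of_openConn {t : ℝ} {u w : V} (h : openConn A ev.opn t u w) :
    ∃ p : G.Walk u w, ∀ e ∈ p.edges, e ∈ A.edgeSet ∧ ev.opn t e := by
  induction h using Relation.ReflTransGen.head_induction_on with
  | refl => exact ⟨.nil, by simp⟩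
  | head hab _ ih =>
    obtain ⟨p, hp⟩ := ih
    refine ⟨.cons hab.1.adj_sub p, ?_⟩
    simp only [SimpleGraph.Walk.edges_cons, List.mem_cons, forall_eq_or_imp]
    exact ⟨⟨hab.1, hab.2⟩, hp⟩

end Evolution

section WholeGraph

variable {G : SimpleGraph V} {c : V → Color} {τ : Sym2 V → ℝ}
  (ev : Evolution (⊤ : G.Subgraph) c τ)

theorem Evolution.col_red_of_walk (hnw : ∀ v, c v ≠ Color.white) {t : ℝ} (ht : 0 ≤ t) :
    ∀ {v y : V} (p : G.Walk v y), c y = Color.red → (∀ e ∈ p.edges, τ e ≤ t) →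
      ev.col t v = Color.red
  | y, _, .nil, hy, _ => (ev.red_iff t ht y (mem_univ y)).2 ⟨y, .refl, hy⟩
  | u, _, .cons (v := v) huv q, hy, hτ => by
    simp only [SimpleGraph.Walk.edges_cons, List.mem_cons, forall_eq_or_imp] at hτ
    have hv : ev.col t v = Color.red := Evolution.col_red_of_walk hnw ht q hy hτ.2
    by_cases hu : ∃ s, 0 ≤ s ∧ s < t ∧ ev.col s u = Color.red
    · obtain ⟨s, hs, hst, hus⟩ := hu
      exact ev.col_red_mono hs hst.le (mem_univ u) hus
    · push Not at hu
      have hopn : ev.opn t s(u, v) :=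
        ev.opn_of_forall_greenTouch ht (by simpa using huv) hτ.1 fun s hs hst =>
          ⟨u, Sym2.mem_mk_left u v,
            ev.col_eq_green_of_ne_red hnw hs (mem_univ u) (hu s hs hst)⟩
      exact ev.col_red_of_adj_of_opn ht (by simpa using huv) hopn hv

variable {ev} in
theorem becomesRedAt.le_of_walk (hnw : ∀ v, c v ≠ Color.white) {x y : V} {t₀ r : ℝ}
    (ht₀ : becomesRedAt ev x t₀) (p : G.Walk x y) (hy : c y = Color.red) (hr : 0 ≤ r)
    (hτ : ∀ e ∈ p.edges, τ e ≤ r) : t₀ ≤ r :=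
  not_lt.1 fun hlt => ht₀.2.2 r hr hlt (ev.col_red_of_walk hnw hr p hy hτ)

end WholeGraph

theorem statement10_general
    {V : Type*} (G : SimpleGraph V)
    (c : V → Color) (hnw : ∀ v, c v ≠ Color.white)
    (τ : Sym2 V → ℝ) (hτpos : ∀ e ∈ G.edgeSet, 0 < τ e)
    (x : V) (hx : c x = Color.green)
    (ev : Evolution (⊤ : G.Subgraph) c τ) (t₀ : ℝ) (ht₀ : becomesRedAt ev x t₀) :
    IsLeast {r : ℝ | ∃ (y : V) (p : G.Walk x y), c y = Color.red ∧
      IsGreatest (τ '' {e | e ∈ p.edges}) r} t₀ := by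
  refine ⟨?_, fun r ⟨y, p, hy, hr⟩ => ?_⟩
  · obtain ⟨w, hxw, hw⟩ := (ev.red_iff t₀ ht₀.1 x (mem_univ x)).1 ht₀.2.1
    obtain ⟨p, hp⟩ := ev.exists_walk_of_openConn hxw
    obtain ⟨e₀, he₀, hmax⟩ :=
      p.exists_isGreatest_image_edges (fun h => by simp [h, hw] at hx) τ
    have hτe₀ : τ e₀ = t₀ :=
      le_antisymm (ev.tau_le_of_opn ht₀.1 (hp e₀ he₀).1 (hp e₀ he₀).2)
        (ht₀.le_of_walk hnw p hw (hτpos e₀ (p.edges_subset_edgeSet he₀)).le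
          fun e he => hmax.2 (mem_image_of_mem τ he))
    exact ⟨w, p, hw, hτe₀ ▸ hmax⟩
  · obtain ⟨⟨e, he, rfl⟩, hub⟩ := hr
    exact ht₀.le_of_walk hnw p hy (hτpos e (p.edges_subset_edgeSet he)).le
      fun e' he' => hub (mem_image_of_mem τ he')

/-- In the finite growth model with no white vertices, the time `t(x)` at
which an initially green vertex `x` becomes red equals the minimum, over all paths `π` from
`x` to an initially red vertex, of the maximal `τ`-value of an edge of `π`. -/
theorem statement10
    {V : Type*} [Fintype V] (G : SimpleGraph V) (hconn : G.Connected)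
    (c : V → Color) (hnw : ∀ v, c v ≠ Color.white)
    (hg : ∃ v, c v = Color.green) (hr : ∃ v, c v = Color.red)
    (τ : Sym2 V → ℝ) (hτpos : ∀ e ∈ G.edgeSet, 0 < τ e)
    (hτinj : ∀ e ∈ G.edgeSet, ∀ f ∈ G.edgeSet, τ e = τ f → e = f)
    (x : V) (hx : c x = Color.green)
    (ev : Evolution (⊤ : G.Subgraph) c τ) (t₀ : ℝ) (ht₀ : becomesRedAt ev x t₀) :
    IsLeast {r : ℝ | ∃ (y : V) (p : G.Walk x y), c y = Color.red ∧
      IsGreatest (τ '' {e | e ∈ p.edges}) r} t₀ :=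
  statement10_general G c hnw τ hτpos x hx ev t₀ ht₀
end RandomSpatialGrowth
end
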